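/- arXiv:2107.10925 — 7 statements merged into one kernel-verified Lean document; each statement's English description precedes it below -/
import Mathlib

section
/- Let G be a group, ρ : G → G a retraction onto a subgroup K₁ = ρ(G), and K₂ < G a separable subgroup with ρ(K₂) ⊆ K₂. Then the double coset K₁K₂ = {k₁k₂ : k₁ ∈ K₁, k₂ ∈ K₂} is separable in G, i.e. closed in the profinite topology. -/
/-!
Since `ρ` is an idempotent endomorphism preserving `K₂`, an element `x` lies in `K₁K₂` exactly
when `ρ(x)⁻¹ x ∈ K₂`; so `K₁K₂` is the preimage of `K₂` under `x ↦ ρ(x)⁻¹ x`. This map is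
uniformly continuous for the profinite structure: if `x⁻¹ y` lies in `N ∩ ρ⁻¹(N)` for a normal
subgroup `N` of finite index, then the images differ by an element of `N`. Preimages of separable
sets under such maps are separable.
-/

/-- A subset `A` of a group `G` is separable if it is closed in the profinite topology. -/
def SeparableIn {G : Type*} [Group G] (A : Set G) : Prop :=
  ∀ g ∉ A, ∃ N : Subgroup G, N.Normal ∧ N.FiniteIndex ∧ ∀ a ∈ A, g⁻¹ * a ∉ N

/-- Uniform continuity for the profinite uniform structures, whose entourages are the relations
`x⁻¹ * y ∈ N` for `N` normal of finite index. -/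
def ProfinitelyUniformContinuous {G H : Type*} [Group G] [Group H] (f : G → H) : Prop :=
  ∀ N : FiniteIndexNormalSubgroup H, ∃ M : FiniteIndexNormalSubgroup G,
    ∀ x y, x⁻¹ * y ∈ M → (f x)⁻¹ * f y ∈ N

section

variable {G H : Type*} [Group G] [Group H]

theorem SeparableIn.preimage {A : Set H} (hA : SeparableIn A) {f : G → H}
    (hf : ProfinitelyUniformContinuous f) : SeparableIn (f ⁻¹' A) := by
  intro g hg
  obtain ⟨N, hN, hNfin, hsep⟩ := hA (f g) hg
  obtain ⟨M, hM⟩ := hf (.ofSubgroup N)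
  exact ⟨M, M.isNormal', M.isFiniteIndex', fun a ha hmem => hsep (f a) ha (hM g a hmem)⟩

theorem profinitelyUniformContinuous_inv_mul (f₁ f₂ : G →* H) :
    ProfinitelyUniformContinuous fun x => (f₁ x)⁻¹ * f₂ x := by
  intro N
  refine ⟨N.comap f₁ ⊓ N.comap f₂, fun x y ⟨h₁, h₂⟩ => ?_⟩
  obtain ⟨n, hn, rfl⟩ : ∃ n ∈ N.comap f₁ ⊓ N.comap f₂, y = x * n := ⟨x⁻¹ * y, ⟨h₁, h₂⟩, by group⟩
  have hconj : f₂ x⁻¹ * f₁ x * (f₁ n)⁻¹ * (f₂ x⁻¹ * f₁ x)⁻¹ ∈ N :=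
    N.isNormal'.conj_mem _ (inv_mem hn.1) _
  convert mul_mem hconj (show f₂ n ∈ N from hn.2) using 1
  simp only [map_mul, map_inv]
  group

end

theorem setOf_range_mul_eq_preimage {G : Type*} [Group G] (ρ : G →* G) (hρ : ρ.comp ρ = ρ)
    (K : Subgroup G) (hρK : ∀ x ∈ K, ρ x ∈ K) :
    {x : G | ∃ k₁ ∈ ρ.range, ∃ k₂ ∈ K, x = k₁ * k₂} = (fun x => (ρ x)⁻¹ * x) ⁻¹' K := by
  ext x
  constructor
  · rintro ⟨_, ⟨y, rfl⟩, k, hk, rfl⟩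
    have hρy : ρ (ρ y) = ρ y := DFunLike.congr_fun hρ y
    have : (ρ (ρ y * k))⁻¹ * (ρ y * k) = (ρ k)⁻¹ * k := by
      rw [map_mul, hρy]
      group
    rw [Set.mem_preimage, this]
    exact mul_mem (inv_mem (hρK k hk)) hk
  · intro hx
    exact ⟨ρ x, ⟨x, rfl⟩, _, hx, (mul_inv_cancel_left _ _).symm⟩

/-- If `ρ : G → G` is a retraction onto `K₁ = ρ(G)` and `K₂ ≤ G` is a separable subgroup with
`ρ(K₂) ⊆ K₂`, then the double coset `K₁K₂` is separable in `G`. -/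
theorem doubleCoset_separable {G : Type*} [Group G]
    (ρ : G →* G) (hρ : ρ.comp ρ = ρ)
    (K₂ : Subgroup G) (hK₂ : SeparableIn (K₂ : Set G))
    (hρK₂ : ∀ x ∈ K₂, ρ x ∈ K₂) :
    SeparableIn {x : G | ∃ k₁ ∈ ρ.range, ∃ k₂ ∈ K₂, x = k₁ * k₂} := by
  rw [setOf_range_mul_eq_preimage ρ hρ K₂ hρK₂]
  exact hK₂.preimage (profinitelyUniformContinuous_inv_mul ρ (MonoidHom.id G))
end

section
/- Let G be a group, ρ : G → G a retraction onto a subgroup K₂ = ρ(G), and K₁, K₃ < G subgroups with ρ(K₁) ⊆ K₁ and ρ(K₃) ⊆ K₃, such that every double coset K₁gK₃ (for g ∈ G) is separable in G. Then the triple coset K₁K₂K₃ = {k₁k₂k₃ : kᵢ ∈ Kᵢ} is separable in G. -/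
namespace Subgroup

variable {G : Type*} [Group G]

instance finiteIndex_comap {G' : Type*} [Group G'] (H : Subgroup G') [H.FiniteIndex]
    (f : G →* G') : (H.comap f).FiniteIndex :=
  ⟨by simpa using relIndex_comap_ne_zero f (K := ⊤) (by simpa using H.index_ne_zero_of_finite)⟩

theorem Normal.inv_mul_mul_mul_mem {N : Subgroup G} (hN : N.Normal) {g l₁ l₃ x y : G}
    (hgx : g⁻¹ * (l₁ * x * l₃) ∈ N) (hxy : x⁻¹ * y ∈ N) : g⁻¹ * (l₁ * y * l₃) ∈ N := by
  have hconj : l₃⁻¹ * (x⁻¹ * y) * l₃ ∈ N := by simpa using hN.conj_mem _ hxy l₃⁻¹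
  have hsplit : g⁻¹ * (l₁ * y * l₃) = g⁻¹ * (l₁ * x * l₃) * (l₃⁻¹ * (x⁻¹ * y) * l₃) := by group
  rw [hsplit]
  exact mul_mem hgx hconj

end Subgroup

namespace MonoidHom

variable {G : Type*} [Group G]

theorem exists_eq_mul_apply_mul_of_comp_self (ρ : G →* G) (hρ : ρ.comp ρ = ρ)
    {K₁ K₃ : Subgroup G} (hρK₁ : ∀ x ∈ K₁, ρ x ∈ K₁) (hρK₃ : ∀ x ∈ K₃, ρ x ∈ K₃)
    {k₁ k₂ k₃ : G} (hk₁ : k₁ ∈ K₁) (hk₂ : k₂ ∈ ρ.range) (hk₃ : k₃ ∈ K₃) :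
    ∃ l₁ ∈ K₁, ∃ l₃ ∈ K₃, k₁ * k₂ * k₃ = l₁ * ρ (k₁ * k₂ * k₃) * l₃ := by
  obtain ⟨c, rfl⟩ := hk₂
  refine ⟨k₁ * (ρ k₁)⁻¹, mul_mem hk₁ (inv_mem (hρK₁ _ hk₁)),
    (ρ k₃)⁻¹ * k₃, mul_mem (inv_mem (hρK₃ _ hk₃)) hk₃, ?_⟩
  have hρρ : ρ (ρ c) = ρ c := DFunLike.congr_fun hρ c
  rw [map_mul, map_mul, hρρ]
  group

end MonoidHom

/-- If `ρ : G → G` is a retraction onto `K₂ = ρ(G)`, and `K₁, K₃ ≤ G` are subgroups with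
`ρ(K₁) ⊆ K₁`, `ρ(K₃) ⊆ K₃`, such that every double coset `K₁gK₃` is separable,
then the triple coset `K₁K₂K₃` is separable in `G`. -/
theorem tripleCoset_separable {G : Type*} [Group G]
    (ρ : G →* G) (hρ : ρ.comp ρ = ρ)
    (K₁ K₃ : Subgroup G)
    (hρK₁ : ∀ x ∈ K₁, ρ x ∈ K₁) (hρK₃ : ∀ x ∈ K₃, ρ x ∈ K₃)
    (hdc : ∀ g : G, SeparableIn {x : G | ∃ k₁ ∈ K₁, ∃ k₃ ∈ K₃, x = k₁ * g * k₃}) :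
    SeparableIn {x : G | ∃ k₁ ∈ K₁, ∃ k₂ ∈ ρ.range, ∃ k₃ ∈ K₃, x = k₁ * k₂ * k₃} := by
  intro g hg
  have hg' : g ∉ {x : G | ∃ k₁ ∈ K₁, ∃ k₃ ∈ K₃, x = k₁ * ρ g * k₃} :=
    fun ⟨k₁, hk₁, k₃, hk₃, h⟩ ↦ hg ⟨k₁, hk₁, ρ g, ⟨g, rfl⟩, k₃, hk₃, h⟩
  obtain ⟨N, hN, _, hsep⟩ := hdc (ρ g) g hg'
  refine ⟨N ⊓ N.comap ρ, inferInstance, inferInstance, ?_⟩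
  rintro _ ⟨k₁, hk₁, k₂, hk₂, k₃, hk₃, rfl⟩ ⟨hgaN, hρgaN⟩
  obtain ⟨l₁, hl₁, l₃, hl₃, ha⟩ :=
    ρ.exists_eq_mul_apply_mul_of_comp_self hρ hρK₁ hρK₃ hk₁ hk₂ hk₃
  have hρaρg : (ρ (k₁ * k₂ * k₃))⁻¹ * ρ g ∈ N := by
    simpa using inv_mem (Subgroup.mem_comap.mp hρgaN)
  exact hsep _ ⟨l₁, hl₁, l₃, hl₃, rfl⟩ (hN.inv_mul_mul_mul_mem (ha ▸ hgaN) hρaρg)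
end

section
/- Let A be a finitely generated free abelian group and let A₁, …, Aₙ be subgroups of A that are linearly independent, meaning that if aᵢ ∈ Aᵢ for each i and a₁ + ⋯ + aₙ = 0 then every aᵢ = 0. Then A commands (A₁, …, Aₙ): there exist finite-index subgroups Ȧᵢ ≤ Aᵢ (in fact one can take Ȧᵢ = Aᵢ) such that for any finite-index subgroups A′ᵢ ≤ Ȧᵢ there exists a finite-index subgroup A′ ≤ A with Aᵢ ∩ A′ = A′ᵢ for all i. -/
/-!
Let `T = ∑ Sᵢ` and `U = ∑ S'ᵢ`. Since each `S'ᵢ` has finite index in `Sᵢ`, the image of `T` in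
the finitely generated group `Q = A ⧸ U` is torsion. The torsion subgroup of `Q` is finite, so with
`e` its exponent, `e • Q` has finite index and meets the torsion trivially; its preimage `B` in `A`
is then a finite-index subgroup with `T ⊓ B = U`. Linear independence of the `Sᵢ` finally gives
`Sᵢ ⊓ U = S'ᵢ`.
-/

namespace AddCommGroup

variable {Q : Type*} [AddCommGroup Q] [AddGroup.FG Q]

theorem finite_torsion : Finite (torsion Q) := by
  have : Module.Finite ℤ Q := Module.Finite.iff_addGroup_fg.mpr ‹_›
  have : Finite (Submodule.torsion ℤ Q) :=
    Module.finite_of_fg_torsion _ Submodule.torsion_isTorsion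
  rwa [← Submodule.torsion_int]

theorem exists_finiteIndex_disjoint_torsion :
    ∃ B : AddSubgroup Q, B.FiniteIndex ∧ Disjoint B (torsion Q) := by
  have := finite_torsion (Q := Q)
  have he : AddMonoid.exponent (torsion Q) ≠ 0 := AddMonoid.exponent_ne_zero_of_finite
  refine ⟨(nsmulAddMonoidHom (AddMonoid.exponent (torsion Q))).range,
    AddSubgroup.finiteIndex_range_nsmulAddMonoidHom_of_fg Q he, ?_⟩
  rw [AddSubgroup.disjoint_def]
  rintro _ ⟨z, rfl⟩ hz
  have hz : z ∈ torsion Q := ((mem_torsion _).mp hz).of_nsmul he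
  exact congrArg Subtype.val (AddMonoid.exponent_nsmul_eq_zero (⟨z, hz⟩ : torsion Q))

end AddCommGroup

namespace AddSubgroup

variable {A : Type*} [AddCommGroup A]

theorem exists_finiteIndex_inf_eq [AddGroup.FG A] {T U : AddSubgroup A} (hUT : U ≤ T)
    (hT : T ≤ (AddCommGroup.torsion (A ⧸ U)).comap (QuotientAddGroup.mk' U)) :
    ∃ B : AddSubgroup A, B.FiniteIndex ∧ T ⊓ B = U := by
  obtain ⟨B, hB, hdisj⟩ := AddCommGroup.exists_finiteIndex_disjoint_torsion (Q := A ⧸ U)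
  refine ⟨B.comap (QuotientAddGroup.mk' U),
    ⟨by rw [index_comap_of_surjective _ (QuotientAddGroup.mk'_surjective U)]
        exact hB.index_ne_zero⟩, le_antisymm ?_ (le_inf hUT ?_)⟩
  · rintro x ⟨hxT, hxB⟩
    rw [← QuotientAddGroup.eq_zero_iff]
    exact disjoint_def.mp hdisj hxB (hT hxT)
  · intro x hx
    simp [(QuotientAddGroup.eq_zero_iff x).mpr hx]

variable {ι : Type*} [Fintype ι] [DecidableEq ι]

theorem exists_sum_eq_of_mem_iSup {S : ι → AddSubgroup A} {x : A} (hx : x ∈ ⨆ i, S i) :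
    ∃ f : ι → A, (∀ i, f i ∈ S i) ∧ ∑ i, f i = x := by
  induction hx using iSup_induction' with
  | hp i y hy =>
    refine ⟨Pi.single i y, fun j => ?_, by simp⟩
    rcases eq_or_ne j i with rfl | hji
    · simpa using hy
    · simp [hji]
  | h1 => exact ⟨0, fun _ => zero_mem _, by simp⟩
  | hadd y z _ _ hy hz =>
    obtain ⟨f, hf, rfl⟩ := hy
    obtain ⟨g, hg, rfl⟩ := hz
    exact ⟨f + g, fun i => add_mem (hf i) (hg i), by simp [Finset.sum_add_distrib]⟩

theorem inf_iSup_le_of_sum_eq_zero {S S' : ι → AddSubgroup A}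
    (hind : ∀ a : ι → A, (∀ i, a i ∈ S i) → ∑ i, a i = 0 → ∀ i, a i = 0)
    (hle : ∀ i, S' i ≤ S i) (i : ι) : S i ⊓ ⨆ j, S' j ≤ S' i := by
  rintro x ⟨hxS, hxS'⟩
  obtain ⟨f, hf, rfl⟩ := exists_sum_eq_of_mem_iSup hxS'
  have hfi := hind (f - Pi.single i (∑ j, f j)) (fun j => ?_) (by simp [Finset.sum_sub_distrib]) i
  · rw [Pi.sub_apply, Pi.single_eq_same, sub_eq_zero] at hfi
    exact hfi ▸ hf i
  · rcases eq_or_ne j i with rfl | hji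
    · simpa using sub_mem (hle j (hf j)) hxS
    · simpa [hji] using hle j (hf j)

end AddSubgroup

theorem freeAbelian_commands_of_linearIndependent_general
    {A : Type*} [AddCommGroup A] [Module.Finite ℤ A]
    (n : ℕ) (S : Fin n → AddSubgroup A)
    (hind : ∀ a : Fin n → A, (∀ i, a i ∈ S i) → (∑ i, a i) = 0 → ∀ i, a i = 0) :
    ∃ Sd : Fin n → AddSubgroup A,
      (∀ i, Sd i ≤ S i ∧ ((Sd i).addSubgroupOf (S i)).FiniteIndex) ∧
      ∀ S' : Fin n → AddSubgroup A,
        (∀ i, S' i ≤ Sd i) → (∀ i, ((S' i).addSubgroupOf (S i)).FiniteIndex) →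
        ∃ B : AddSubgroup A, B.FiniteIndex ∧ ∀ i, S i ⊓ B = S' i := by
  refine ⟨S, fun i => ⟨le_rfl, by rw [AddSubgroup.addSubgroupOf_self]; infer_instance⟩,
    fun S' hle hfi => ?_⟩
  have : AddGroup.FG A := Module.Finite.iff_addGroup_fg.mp ‹_›
  have htors :
      ⨆ i, S i ≤ (AddCommGroup.torsion (A ⧸ ⨆ i, S' i)).comap (QuotientAddGroup.mk' _) :=
    iSup_le fun i x hx => isOfFinAddOrder_iff_nsmul_eq_zero.mpr
      ⟨_, Nat.pos_of_ne_zero (hfi i).index_ne_zero, (QuotientAddGroup.eq_zero_iff _).mpr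
        (AddSubgroup.mem_iSup_of_mem i (AddSubgroup.nsmul_relIndex_mem (S' i) hx))⟩
  obtain ⟨B, hB, hTB⟩ := AddSubgroup.exists_finiteIndex_inf_eq (iSup_mono hle) htors
  refine ⟨B, hB, fun i => le_antisymm ?_ (le_inf (hle i) ?_)⟩
  · calc S i ⊓ B = S i ⊓ ((⨆ j, S j) ⊓ B) := by rw [← inf_assoc, inf_eq_left.mpr (le_iSup S i)]
      _ = S i ⊓ ⨆ j, S' j := by rw [hTB]
      _ ≤ S' i := AddSubgroup.inf_iSup_le_of_sum_eq_zero hind hle i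
  · exact (le_iSup S' i).trans (hTB ▸ inf_le_right)

/-- If `A` is a finitely generated free abelian group and `S₁, …, Sₙ` are linearly independent
subgroups (any tuple of elements summing to zero is identically zero), then `A` commands
`(S₁, …, Sₙ)`: there are finite-index subgroups `Ṡᵢ ≤ Sᵢ` such that for all finite-index
subgroups `S′ᵢ ≤ Ṡᵢ` there is a finite-index subgroup `B ≤ A` with `Sᵢ ∩ B = S′ᵢ` for all `i`. -/
theorem freeAbelian_commands_of_linearIndependent
    {A : Type*} [AddCommGroup A] [Module.Free ℤ A] [Module.Finite ℤ A]
    (n : ℕ) (S : Fin n → AddSubgroup A)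
    (hind : ∀ a : Fin n → A, (∀ i, a i ∈ S i) → (∑ i, a i) = 0 → ∀ i, a i = 0) :
    ∃ Sd : Fin n → AddSubgroup A,
      (∀ i, Sd i ≤ S i ∧ ((Sd i).addSubgroupOf (S i)).FiniteIndex) ∧
      ∀ S' : Fin n → AddSubgroup A,
        (∀ i, S' i ≤ Sd i) → (∀ i, ((S' i).addSubgroupOf (S i)).FiniteIndex) →
        ∃ B : AddSubgroup A, B.FiniteIndex ∧ ∀ i, S i ⊓ B = S' i :=
  freeAbelian_commands_of_linearIndependent_general n S hind
end

section
/- Let A be a finitely generated free abelian group and A₁, …, Aₙ subgroups that are NOT linearly independent (i.e. there exist aᵢ ∈ Aᵢ, not all zero, with a₁ + ⋯ + aₙ = 0). Then A does not command (A₁, …, Aₙ): for any finite-index subgroups Ȧᵢ ≤ Aᵢ there exist finite-index subgroups A′ᵢ ≤ Ȧᵢ such that no finite-index subgroup A′ ≤ A satisfies Aᵢ ∩ A′ = A′ᵢ for all i. -/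
/-!
Multiplying a dependence relation `∑ aᵢ = 0` by the product `m` of the relative indices of the
`Ṡᵢ` in the `Sᵢ` puts every `m • aᵢ` into `Ṡᵢ` and keeps the sum zero, while `m • aⱼ ≠ 0` for some
`j` because `A` is torsion-free. Free abelian groups are residually finite, so a finite-index
subgroup `K` misses `m • aⱼ`; take `S′ⱼ = Ṡⱼ ⊓ K` and `S′ᵢ = Ṡᵢ` otherwise. A subgroup `B` with
`Sᵢ ⊓ B = S′ᵢ` for all `i` contains `m • aᵢ` for `i ≠ j`, hence `m • aⱼ = -∑_{i ≠ j} m • aᵢ`,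
which then lies in `Sⱼ ⊓ B ≤ K`.
-/

open Function

instance Module.Free.addGroupResiduallyFinite {A : Type*} [AddCommGroup A] [Module.Free ℤ A] :
    AddGroup.ResiduallyFinite A := by
  refine AddGroup.residuallyFinite_iff_exists_finiteIndex.2 fun x hx => ?_
  let b := Module.Free.chooseBasis ℤ A
  obtain ⟨i, hi⟩ : ∃ i, b.repr x i ≠ 0 := by
    by_contra! h
    exact hx (b.repr.map_eq_zero_iff.1 (Finsupp.ext h))
  let f : A →+ ZMod ((b.repr x i).natAbs + 1) :=
    (Int.castAddHom _).comp (b.coord i).toAddMonoidHom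
  refine ⟨f.ker, AddSubgroup.finiteIndex_ker f, fun hxf => hi ?_⟩
  have hdvd : ((b.repr x i).natAbs + 1 : ℤ) ∣ b.repr x i :=
    (ZMod.intCast_zmod_eq_zero_iff_dvd _ _).1 (AddMonoidHom.mem_ker.1 hxf)
  exact Int.eq_zero_of_dvd_of_natAbs_lt_natAbs hdvd (by omega)

namespace AddSubgroup

variable {ι A : Type*} [Fintype ι] [AddCommGroup A]

theorem exists_nsmul_mem_of_isFiniteRelIndex {H K : ι → AddSubgroup A}
    [∀ i, (H i).IsFiniteRelIndex (K i)] {a : ι → A} (ha : ∀ i, a i ∈ K i) :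
    ∃ m ≠ 0, ∀ i, m • a i ∈ H i := by
  refine ⟨∏ i, (H i).relIndex (K i),
    Finset.prod_ne_zero_iff.2 fun i _ => relIndex_ne_zero, fun i => ?_⟩
  obtain ⟨k, hk⟩ := Finset.dvd_prod_of_mem (fun i => (H i).relIndex (K i)) (Finset.mem_univ i)
  rw [hk, mul_nsmul]
  exact nsmul_mem ((H i).nsmul_relIndex_mem (ha i)) k

theorem mem_of_sum_eq_zero {B : AddSubgroup A} {a : ι → A} (hsum : ∑ i, a i = 0) {j : ι}
    (ha : ∀ i ≠ j, a i ∈ B) : a j ∈ B := by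
  classical
  rw [Fintype.sum_eq_add_sum_compl j, add_eq_zero_iff_eq_neg] at hsum
  rw [hsum]
  exact neg_mem (sum_mem fun i hi => ha i (Finset.mem_compl.1 hi ∘ Finset.mem_singleton.2))

theorem not_forall_inf_eq_update_inf [DecidableEq ι] {S Sd : ι → AddSubgroup A} {a : ι → A}
    (hsum : ∑ i, a i = 0) (ha : ∀ i, a i ∈ Sd i) (hSd : ∀ i, Sd i ≤ S i) {j : ι}
    {K : AddSubgroup A} (hj : a j ∉ K) (B : AddSubgroup A) :
    ¬ ∀ i, S i ⊓ B = update Sd j (Sd j ⊓ K) i := by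
  intro hB
  have haB : a j ∈ B := mem_of_sum_eq_zero hsum fun i hij => by
    have : a i ∈ S i ⊓ B := by rw [hB i, update_of_ne hij]; exact ha i
    exact this.2
  have : a j ∈ S j ⊓ B := ⟨hSd j (ha j), haB⟩
  rw [hB j, update_self] at this
  exact hj this.2

end AddSubgroup

theorem freeAbelian_not_commands_of_not_linearIndependent_general
    {A : Type*} [AddCommGroup A] [Module.Free ℤ A]
    (n : ℕ) (S : Fin n → AddSubgroup A)
    (hdep : ∃ a : Fin n → A, (∀ i, a i ∈ S i) ∧ (∑ i, a i) = 0 ∧ ∃ i, a i ≠ 0) :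
    ∀ Sd : Fin n → AddSubgroup A,
      (∀ i, Sd i ≤ S i ∧ ((Sd i).addSubgroupOf (S i)).FiniteIndex) →
      ∃ S' : Fin n → AddSubgroup A,
        (∀ i, S' i ≤ Sd i ∧ ((S' i).addSubgroupOf (S i)).FiniteIndex) ∧
        ¬ ∃ B : AddSubgroup A, B.FiniteIndex ∧ ∀ i, S i ⊓ B = S' i := by
  obtain ⟨a, ha, hsum, j, hj⟩ := hdep
  intro Sd hSd
  have := fun i => AddSubgroup.isFiniteRelIndex_iff_finiteIndex.2 (hSd i).2
  obtain ⟨m, hm, hmSd⟩ := AddSubgroup.exists_nsmul_mem_of_isFiniteRelIndex (H := Sd) ha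
  have hmj : m • a j ≠ 0 := by
    rw [← natCast_zsmul]
    exact smul_ne_zero (by exact_mod_cast hm) hj
  obtain ⟨K, hK, hjK⟩ := AddGroup.residuallyFinite_iff_exists_finiteIndex.1 inferInstance _ hmj
  refine ⟨update Sd j (Sd j ⊓ K), fun i => ?_, fun ⟨B, _, hB⟩ =>
    AddSubgroup.not_forall_inf_eq_update_inf (by rw [← Finset.smul_sum, hsum, smul_zero])
      hmSd (fun i => (hSd i).1) hjK B hB⟩
  rcases eq_or_ne i j with rfl | hij
  · rw [update_self, ← AddSubgroup.isFiniteRelIndex_iff_finiteIndex,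
      AddSubgroup.isFiniteRelIndex_iff_relIndex_ne_zero]
    exact ⟨inf_le_left, AddSubgroup.relIndex_inf_ne_zero AddSubgroup.relIndex_ne_zero
      AddSubgroup.isFiniteRelIndex_of_finiteIndex.relIndex_ne_zero⟩
  · rw [update_of_ne hij]
    exact ⟨le_rfl, (hSd i).2⟩

/-- If `A` is a finitely generated free abelian group and `S₁, …, Sₙ` are subgroups that are
NOT linearly independent, then `A` does not command `(S₁, …, Sₙ)`: for any finite-index
subgroups `Ṡᵢ ≤ Sᵢ` there are finite-index subgroups `S′ᵢ ≤ Ṡᵢ` such that no finite-index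
subgroup `B ≤ A` satisfies `Sᵢ ∩ B = S′ᵢ` for all `i`. -/
theorem freeAbelian_not_commands_of_not_linearIndependent
    {A : Type*} [AddCommGroup A] [Module.Free ℤ A] [Module.Finite ℤ A]
    (n : ℕ) (S : Fin n → AddSubgroup A)
    (hdep : ∃ a : Fin n → A, (∀ i, a i ∈ S i) ∧ (∑ i, a i) = 0 ∧ ∃ i, a i ≠ 0) :
    ∀ Sd : Fin n → AddSubgroup A,
      (∀ i, Sd i ≤ S i ∧ ((Sd i).addSubgroupOf (S i)).FiniteIndex) →
      ∃ S' : Fin n → AddSubgroup A,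
        (∀ i, S' i ≤ Sd i ∧ ((S' i).addSubgroupOf (S i)).FiniteIndex) ∧
        ¬ ∃ B : AddSubgroup A, B.FiniteIndex ∧ ∀ i, S i ⊓ B = S' i :=
  freeAbelian_not_commands_of_not_linearIndependent_general n S hdep
end

section
/- Let G be a group and g₁, …, gₙ elements of infinite order. Then G commands the set {g₁, …, gₙ} (in the sense of element-commanding, with some N > 0 and prescribed orders Nrᵢ in finite quotients) if and only if G commands the collection of cyclic subgroups (⟨g₁⟩, …, ⟨gₙ⟩) (in the sense of subgroup-commanding). -/
/-- `G` commands the elements `g₁, …, gₙ`: there is `N > 0` such that for all positive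
`r₁, …, rₙ` there is a homomorphism to a finite group (equivalently a finite-index normal
subgroup `H`, its kernel) in which the image of `gᵢ` has order exactly `N·rᵢ`
(expressed as `gᵢ^k ∈ H ↔ N·rᵢ ∣ k`). -/
def CommandsElts {G : Type*} [Group G] {n : ℕ} (g : Fin n → G) : Prop :=
  ∃ N : ℕ, 0 < N ∧ ∀ r : Fin n → ℕ, (∀ i, 0 < r i) →
    ∃ H : Subgroup G, H.Normal ∧ H.FiniteIndex ∧
      ∀ i, ∀ k : ℕ, (g i) ^ k ∈ H ↔ (N * r i) ∣ k

/-- `G` commands the subgroups `P₁, …, Pₙ`: there are finite-index subgroups `Ṗᵢ ≤ Pᵢ` such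
that for any finite-index subgroups `P′ᵢ ≤ Ṗᵢ` normal in `Pᵢ` there is a finite-index
normal subgroup `G′ ⊴ G` with `Pᵢ ∩ G′ = P′ᵢ`. -/
def CommandsSubgroups {G : Type*} [Group G] {n : ℕ} (P : Fin n → Subgroup G) : Prop :=
  ∃ Pd : Fin n → Subgroup G,
    (∀ i, Pd i ≤ P i ∧ ((Pd i).subgroupOf (P i)).FiniteIndex) ∧
    ∀ P' : Fin n → Subgroup G,
      (∀ i, P' i ≤ Pd i ∧ ((P' i).subgroupOf (P i)).FiniteIndex ∧
        ((P' i).subgroupOf (P i)).Normal) →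
      ∃ G' : Subgroup G, G'.Normal ∧ G'.FiniteIndex ∧ ∀ i, P i ⊓ G' = P' i

/-! The exponents `k` with `g ^ k ∈ H` form a subgroup of `ℤ`, namely the one generated by the
relative index of `H` in `⟨g⟩` (which is `0` when that index is infinite). So a finite-index
subgroup of `⟨g⟩` is determined by its index, and when `g` has infinite order `⟨gᵐ⟩` is the
subgroup of index `m`. Given `N` commanding the `gᵢ`, take `Ṗᵢ = ⟨gᵢᴺ⟩`: a finite-index
`P′ᵢ ≤ Ṗᵢ` has index `N rᵢ` in `⟨gᵢ⟩`, and a kernel in which `gᵢ` has order `N rᵢ` cuts out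
exactly `P′ᵢ`. Conversely, given the `Ṗᵢ`, take for `N` the product of their indices, so that
each `⟨gᵢ^(N rᵢ)⟩` lies in `Ṗᵢ`. -/

theorem Int.mem_addSubgroup_iff_index_dvd (K : AddSubgroup ℤ) (k : ℤ) :
    k ∈ K ↔ (K.index : ℤ) ∣ k := by
  obtain ⟨a, rfl⟩ := Int.subgroup_cyclic K
  rw [← AddSubgroup.zmultiples_eq_closure, Int.index_zmultiples, ← Int.zmultiples_natAbs,
    Int.mem_zmultiples_iff]

namespace Subgroup

variable {G : Type*} [Group G]

theorem zpow_mem_iff_relIndex_zpowers_dvd (g : G) (H : Subgroup G) (k : ℤ) :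
    g ^ k ∈ H ↔ (H.relIndex (zpowers g) : ℤ) ∣ k := by
  have hindex : (toAddSubgroup' (H.comap (zpowersHom G g))).index = H.relIndex (zpowers g) := by
    rw [← range_zpowersHom, ← index_comap]
    rfl
  rw [← hindex, ← Int.mem_addSubgroup_iff_index_dvd]
  simp

theorem zpow_mem_zpowers_pow_iff {g : G} (hg : ¬ IsOfFinOrder g) (m : ℕ) (k : ℤ) :
    g ^ k ∈ zpowers (g ^ m) ↔ (m : ℤ) ∣ k := by
  rw [mem_zpowers_iff]
  constructor
  · rintro ⟨l, hl⟩
    rw [← zpow_natCast, ← zpow_mul] at hl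
    exact ⟨l, (injective_zpow_iff_not_isOfFinOrder.2 hg hl).symm⟩
  · rintro ⟨l, rfl⟩
    exact ⟨l, by rw [← zpow_natCast, ← zpow_mul]⟩

theorem pow_mem_zpowers_pow_iff {g : G} (hg : ¬ IsOfFinOrder g) (m k : ℕ) :
    g ^ k ∈ zpowers (g ^ m) ↔ m ∣ k := by
  rw [← zpow_natCast g k, zpow_mem_zpowers_pow_iff hg, Int.natCast_dvd_natCast]

theorem relIndex_zpowers_pow {g : G} (hg : ¬ IsOfFinOrder g) (m : ℕ) :
    (zpowers (g ^ m)).relIndex (zpowers g) = m := by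
  have hdvd (k : ℤ) : ((zpowers (g ^ m)).relIndex (zpowers g) : ℤ) ∣ k ↔ (m : ℤ) ∣ k := by
    rw [← zpow_mem_iff_relIndex_zpowers_dvd, zpow_mem_zpowers_pow_iff hg]
  exact Int.natCast_inj.1 <| Int.dvd_antisymm (Int.natCast_nonneg _) (Int.natCast_nonneg _)
    ((hdvd m).2 dvd_rfl) ((hdvd _).1 dvd_rfl)

theorem finiteIndex_zpowers_pow_subgroupOf {g : G} (hg : ¬ IsOfFinOrder g) {m : ℕ} (hm : m ≠ 0) :
    ((zpowers (g ^ m)).subgroupOf (zpowers g)).FiniteIndex :=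
  ⟨(relIndex_zpowers_pow hg m).trans_ne hm⟩

theorem zpowers_inf_eq_of_pow_mem_iff {g : G} {H K : Subgroup G} (hK : K ≤ zpowers g)
    (h : ∀ k : ℕ, g ^ k ∈ H ↔ g ^ k ∈ K) : zpowers g ⊓ H = K := by
  have hz (k : ℤ) : g ^ k ∈ H ↔ g ^ k ∈ K := by
    obtain ⟨k, rfl | rfl⟩ := k.eq_nat_or_neg
    · simpa using h k
    · simpa using h k
  ext x
  constructor
  · rintro ⟨hx, hxH⟩
    obtain ⟨k, rfl⟩ := mem_zpowers_iff.1 hx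
    exact (hz k).1 hxH
  · intro hx
    obtain ⟨k, rfl⟩ := mem_zpowers_iff.1 (hK hx)
    exact ⟨zpow_mem (mem_zpowers g) k, (hz k).2 hx⟩

end Subgroup

open Subgroup

section

variable {G : Type*} [Group G] {n : ℕ} {g : Fin n → G}

theorem CommandsElts.commandsSubgroups_zpowers (hinf : ∀ i, ¬ IsOfFinOrder (g i))
    (hg : CommandsElts g) : CommandsSubgroups (fun i => zpowers (g i)) := by
  obtain ⟨N, hN, hcommand⟩ := hg
  have hle (i : Fin n) : zpowers (g i ^ N) ≤ zpowers (g i) :=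
    zpowers_le.2 (pow_mem (mem_zpowers _) N)
  refine ⟨fun i => zpowers (g i ^ N),
    fun i => ⟨hle i, finiteIndex_zpowers_pow_subgroupOf (hinf i) hN.ne'⟩, fun P' hP' => ?_⟩
  set m := fun i => (P' i).relIndex (zpowers (g i))
  have hm (i : Fin n) : m i ≠ 0 := (hP' i).2.1.index_ne_zero
  have hNm (i : Fin n) : N ∣ m i :=
    relIndex_zpowers_pow (hinf i) N ▸ relIndex_dvd_of_le_left _ (hP' i).1
  obtain ⟨H, hHn, hHfi, hH⟩ := hcommand (fun i => m i / N)
    fun i => Nat.div_pos (Nat.le_of_dvd (Nat.pos_of_ne_zero (hm i)) (hNm i)) hN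
  refine ⟨H, hHn, hHfi, fun i => zpowers_inf_eq_of_pow_mem_iff ((hP' i).1.trans (hle i)) ?_⟩
  intro k
  rw [hH i, Nat.mul_div_cancel' (hNm i), ← zpow_natCast, zpow_mem_iff_relIndex_zpowers_dvd,
    Int.natCast_dvd_natCast]

theorem CommandsSubgroups.commandsElts_of_zpowers (hinf : ∀ i, ¬ IsOfFinOrder (g i))
    (hg : CommandsSubgroups (fun i => zpowers (g i))) : CommandsElts g := by
  obtain ⟨Pd, hPd, hcommand⟩ := hg
  set M := fun i => (Pd i).relIndex (zpowers (g i))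
  have hM (i : Fin n) : 0 < M i := Nat.pos_of_ne_zero (hPd i).2.index_ne_zero
  refine ⟨∏ i, M i, Finset.prod_pos fun i _ => hM i, fun r hr => ?_⟩
  have hNr (i : Fin n) : (∏ j, M j) * r i ≠ 0 :=
    (Nat.mul_pos (Finset.prod_pos fun j _ => hM j) (hr i)).ne'
  have hle (i : Fin n) : zpowers (g i ^ ((∏ j, M j) * r i)) ≤ Pd i := by
    rw [zpowers_le, ← zpow_natCast, zpow_mem_iff_relIndex_zpowers_dvd, Int.natCast_dvd_natCast]
    exact (Finset.dvd_prod_of_mem M (Finset.mem_univ i)).mul_right _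
  obtain ⟨G', hG'n, hG'fi, hG'⟩ := hcommand _
    fun i => ⟨hle i, finiteIndex_zpowers_pow_subgroupOf (hinf i) (hNr i), inferInstance⟩
  refine ⟨G', hG'n, hG'fi, fun i k => ?_⟩
  rw [← pow_mem_zpowers_pow_iff (hinf i), ← hG' i, mem_inf,
    and_iff_right (pow_mem (mem_zpowers _) k)]

end

/-- For elements of infinite order, commanding the elements is equivalent to commanding
the cyclic subgroups they generate. -/
theorem commandsElts_iff_commands_zpowers {G : Type*} [Group G] {n : ℕ}
    (g : Fin n → G) (hinf : ∀ i, ¬ IsOfFinOrder (g i)) :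
    CommandsElts g ↔ CommandsSubgroups (fun i => Subgroup.zpowers (g i)) :=
  ⟨CommandsElts.commandsSubgroups_zpowers hinf, CommandsSubgroups.commandsElts_of_zpowers hinf⟩
end

section
/- Let G be a residually finite group that commands a collection of subgroups (P₁, …, Pₙ). If Pᵢ = Pⱼ for some i ≠ j, then Pᵢ is finite. -/
/-- A group is residually finite if every nontrivial element survives in some finite quotient. -/
def ResiduallyFinite (G : Type*) [Group G] : Prop :=
  ∀ g : G, g ≠ 1 → ∃ N : Subgroup G, N.Normal ∧ N.FiniteIndex ∧ g ∉ N

/-! If `Pᵢ = Pⱼ = Q`, commanding forces `Q ⊓ G' = P'ᵢ` and `Q ⊓ G' = P'ⱼ` for one `G'`, so any two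
admissible choices of `P'ᵢ` and `P'ⱼ` coincide. When `Q` is infinite, residual finiteness of `Q`
yields two distinct finite-index normal subgroups of `Q` inside `Ṗᵢ ⊓ Ṗⱼ`. -/

section

variable {G : Type*} [Group G]

namespace ResiduallyFinite

theorem subgroup (hG : ResiduallyFinite G) (Q : Subgroup G) : ResiduallyFinite Q := by
  intro g hg
  obtain ⟨N, _, _, hgN⟩ := hG g (by simpa using hg)
  exact ⟨N.subgroupOf Q, inferInstance, inferInstance, hgN⟩

theorem exists_normal_finiteIndex_lt [Infinite G] (hG : ResiduallyFinite G) (H : Subgroup G)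
    [H.FiniteIndex] : ∃ H' : Subgroup G, H'.Normal ∧ H'.FiniteIndex ∧ H' < H := by
  have hcore : H.normalCore ≠ ⊥ := by
    intro hbot
    have : Finite G := (Subgroup.finite_iff_finite_and_finiteIndex H.normalCore).mpr
      ⟨by rw [hbot]; infer_instance, inferInstance⟩
    exact not_finite G
  obtain ⟨x, hx, hx1⟩ := H.normalCore.bot_or_exists_ne_one.resolve_left hcore
  obtain ⟨K, _, _, hxK⟩ := hG x hx1
  refine ⟨H.normalCore ⊓ K, inferInstance, inferInstance,
    lt_of_le_of_ne (inf_le_left.trans H.normalCore_le) fun heq => hxK ?_⟩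
  exact (heq.ge (H.normalCore_le hx)).2

end ResiduallyFinite

theorem Subgroup.map_subtype_le_finiteIndex_normal {Q D : Subgroup G} (M : Subgroup Q)
    [M.FiniteIndex] [M.Normal] (hM : M ≤ D.subgroupOf Q) :
    M.map Q.subtype ≤ D ∧ ((M.map Q.subtype).subgroupOf Q).FiniteIndex ∧
      ((M.map Q.subtype).subgroupOf Q).Normal := by
  have hsub : (M.map Q.subtype).subgroupOf Q = M :=
    Subgroup.comap_map_eq_self_of_injective Q.subtype_injective M
  rw [hsub]
  exact ⟨Subgroup.map_le_iff_le_comap.mpr hM, ‹_›, ‹_›⟩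

namespace CommandsSubgroups

theorem comp {n m : ℕ} {P : Fin n → Subgroup G} (h : CommandsSubgroups P) {f : Fin m → Fin n}
    (hf : Function.Injective f) : CommandsSubgroups (P ∘ f) := by
  obtain ⟨Pd, hPd, hcmd⟩ := h
  refine ⟨Pd ∘ f, fun a => hPd (f a), fun P' hP' => ?_⟩
  let core k : Subgroup G := ((Pd k).subgroupOf (P k)).normalCore.map (P k).subtype
  have hcore k := haveI := (hPd k).2
    Subgroup.map_subtype_le_finiteIndex_normal _ ((Pd k).subgroupOf (P k)).normalCore_le
  obtain ⟨G', hG'n, hG'fi, hG'⟩ := hcmd (Function.extend f P' core) fun k => by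
    by_cases hk : ∃ a, f a = k
    · obtain ⟨a, rfl⟩ := hk
      rw [hf.extend_apply]
      exact hP' a
    · rw [Function.extend_apply' _ _ _ hk]
      exact hcore k
  exact ⟨G', hG'n, hG'fi, fun a => (hG' (f a)).trans (hf.extend_apply _ _ _)⟩

theorem finite_of_pair_self (hG : ResiduallyFinite G) {Q : Subgroup G}
    (h : CommandsSubgroups ![Q, Q]) : (Q : Set G).Finite := by
  by_contra hinf
  have : Infinite Q := Set.Infinite.to_subtype hinf
  obtain ⟨Pd, hPd, hcmd⟩ := h
  have : ((Pd 0).subgroupOf Q).FiniteIndex := (hPd 0).2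
  have : ((Pd 1).subgroupOf Q).FiniteIndex := (hPd 1).2
  let M := ((Pd 0).subgroupOf Q ⊓ (Pd 1).subgroupOf Q).normalCore
  have hM : M ≤ (Pd 0).subgroupOf Q ⊓ (Pd 1).subgroupOf Q := Subgroup.normalCore_le _
  obtain ⟨M', _, _, hM'⟩ := (hG.subgroup Q).exists_normal_finiteIndex_lt M
  obtain ⟨G', -, -, hG'⟩ := hcmd ![M.map Q.subtype, M'.map Q.subtype] <| Fin.forall_fin_two.mpr
    ⟨Subgroup.map_subtype_le_finiteIndex_normal M (hM.trans inf_le_left),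
      Subgroup.map_subtype_le_finiteIndex_normal M' (hM'.le.trans (hM.trans inf_le_right))⟩
  have hMM' : M.map Q.subtype = M'.map Q.subtype := (hG' 0).symm.trans (hG' 1)
  exact hM'.ne (Subgroup.map_injective Q.subtype_injective hMM').symm

end CommandsSubgroups

end

/-- If a residually finite group `G` commands `(P₁, …, Pₙ)` and `Pᵢ = Pⱼ` for `i ≠ j`,
then `Pᵢ` is finite. -/
theorem commands_duplicate_finite {G : Type*} [Group G] {n : ℕ}
    (hRF : ResiduallyFinite G) (P : Fin n → Subgroup G) (h : CommandsSubgroups P)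
    (i j : Fin n) (hij : i ≠ j) (hP : P i = P j) :
    (P i : Set G).Finite := by
  have hinj : Function.Injective ![i, j] := by
    intro a b
    fin_cases a <;> fin_cases b <;> simp [hij, hij.symm]
  have hpair : P ∘ ![i, j] = ![P i, P i] := by
    funext k
    fin_cases k
    exacts [rfl, hP.symm]
  exact CommandsSubgroups.finite_of_pair_self hRF (hpair ▸ h.comp hinj)
end

section
/- Let A be a finitely generated free abelian group with linearly independent subgroups A₁, …, Aₙ, and let A′ᵢ ≤ Aᵢ be finite-index subgroups. Set B = A′₁ + ⋯ + A′ₙ. Then there exists a subgroup C ≤ A with C ∩ B = 0 such that A′ := B + C has finite index in A, and moreover Aᵢ ∩ A′ = A′ᵢ for each i, and (A′ + Aⱼ) ∩ (A′ + Aₖ) = A′ for all j ≠ k. -/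
/-!
Let `K` be the saturation of `B = S'₁ + ⋯ + S'ₙ`, the elements of `A` with a nonzero multiple
in `B`. Every `Sᵢ` lies in `K` because `S'ᵢ` has finite index in `Sᵢ`, and `A ⧸ K`, the
torsion-free part of the finitely generated group `A ⧸ B`, is free, so `K` has a complement `C`.
Then `A' = B + C` has finite index (as `K ⧸ B` is torsion) and `A' ∩ K = B` by the modular law.
Since all `Sᵢ` lie in `K`, the remaining identities reduce to statements inside `K`, where
independence of the `Sᵢ` gives `Sᵢ ∩ B = S'ᵢ` and `Sⱼ ∩ (B + Sₖ) = S'ⱼ` for `j ≠ k`.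
-/

namespace iSupIndep

variable {α ι : Type*} [CompleteLattice α] [IsModularLattice α] {S T : ι → α}

theorem inf_sup_eq_of_le (hS : iSupIndep S) {j : ι} {a b : α} (ha : a ≤ S j)
    (hb : b ≤ ⨆ (i) (_ : i ≠ j), S i) : S j ⊓ (a ⊔ b) = a := by
  rw [inf_comm, sup_inf_assoc_of_le b ha, ((hS j).symm.mono_left hb).eq_bot, sup_bot_eq]

theorem inf_iSup_of_le (hS : iSupIndep S) (hTS : T ≤ S) (j : ι) : S j ⊓ ⨆ i, T i = T j := by
  rw [iSup_split_single T j]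
  exact hS.inf_sup_eq_of_le (hTS j) (iSup₂_mono fun i _ => hTS i)

theorem inf_iSup_sup_of_ne (hS : iSupIndep S) (hTS : T ≤ S) {j k : ι} (hjk : j ≠ k) :
    S j ⊓ ((⨆ i, T i) ⊔ S k) = T j := by
  rw [iSup_split_single T j, sup_assoc]
  exact hS.inf_sup_eq_of_le (hTS j)
    (sup_le (iSup₂_mono fun i _ => hTS i) (le_iSup₂_of_le k hjk.symm le_rfl))

variable {K A' : α}

theorem inf_eq_of_inf_eq_iSup (hS : iSupIndep S) (hTS : T ≤ S) (hSK : ∀ i, S i ≤ K)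
    (hA' : A' ⊓ K = ⨆ i, T i) (i : ι) : S i ⊓ A' = T i := by
  rw [← inf_eq_left.mpr (hSK i), inf_assoc, inf_comm K, hA', hS.inf_iSup_of_le hTS]

theorem sup_inf_sup_eq_of_inf_eq_iSup (hS : iSupIndep S) (hTS : T ≤ S) (hSK : ∀ i, S i ≤ K)
    (hA' : A' ⊓ K = ⨆ i, T i) {j k : ι} (hjk : j ≠ k) : (A' ⊔ S j) ⊓ (A' ⊔ S k) = A' := by
  have hT : ⨆ i, T i ≤ A' := hA' ▸ inf_le_left
  have hj : S j ⊓ (A' ⊔ S k) = T j := by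
    rw [← inf_eq_left.mpr (hSK j), inf_assoc, inf_comm K, sup_comm, sup_inf_assoc_of_le A' (hSK k),
      hA', sup_comm, hS.inf_iSup_sup_of_ne hTS hjk]
  rw [sup_inf_assoc_of_le _ le_sup_left, hj]
  exact sup_eq_left.mpr ((le_iSup T j).trans hT)

end iSupIndep

theorem LinearMap.exists_isCompl_ker {R M N : Type*} [Ring R] [AddCommGroup M] [Module R M]
    [AddCommGroup N] [Module R N] [Module.Projective R N] (f : M →ₗ[R] N)
    (hf : Function.Surjective f) : ∃ q : Submodule R M, IsCompl (ker f) q := by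
  obtain ⟨σ, hσ⟩ := Module.projective_lifting_property f LinearMap.id hf
  have hfσ (y : N) : f (σ y) = y := LinearMap.congr_fun hσ y
  refine ⟨range σ, ⟨?_, ?_⟩⟩
  · rw [Submodule.disjoint_def]
    rintro _ hx ⟨y, rfl⟩
    rw [mem_ker, hfσ] at hx
    rw [hx, map_zero]
  · rw [Submodule.codisjoint_iff_exists_add_eq]
    exact fun x => ⟨x - σ (f x), σ (f x), by simp [hfσ], mem_range_self σ _, sub_add_cancel _ _⟩

namespace AddSubgroup

variable {A : Type*} [AddCommGroup A]

theorem iSupIndep_of_sum_eq_zero {ι : Type*} [Fintype ι] {S : ι → AddSubgroup A}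
    (h : ∀ a : ι → A, (∀ i, a i ∈ S i) → ∑ i, a i = 0 → ∀ i, a i = 0) : iSupIndep S := by
  classical
  rw [← iSupIndep_map_orderIso_iff AddSubgroup.toIntSubmodule,
    iSupIndep_iff_finsetSum_eq_zero_imp_eq_zero]
  intro s v hv hsum i hi
  simpa [hi] using h (fun i => if i ∈ s then v i else 0)
    (fun i => by split_ifs with hi; exacts [hv i hi, zero_mem _])
    (by rw [Finset.sum_ite_mem, Finset.univ_inter, hsum]) i

def saturation (B : AddSubgroup A) : AddSubgroup A :=
  ((Submodule.torsion ℤ (A ⧸ B.toIntSubmodule)).comap B.toIntSubmodule.mkQ).toAddSubgroup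

theorem mem_saturation {B : AddSubgroup A} {x : A} :
    x ∈ B.saturation ↔ ∃ m : ℤ, m ≠ 0 ∧ m • x ∈ B := by
  simp only [saturation, Submodule.mem_toAddSubgroup, Submodule.mem_comap,
    Submodule.mem_torsion_iff, Submodule.mkQ_apply, ← Submodule.Quotient.mk_smul,
    Submodule.Quotient.mk_eq_zero]
  exact ⟨fun ⟨a, ha⟩ => ⟨a, nonZeroDivisors.coe_ne_zero a, ha⟩,
    fun ⟨m, hm, hmx⟩ => ⟨⟨m, mem_nonZeroDivisors_of_ne_zero hm⟩, hmx⟩⟩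

theorem le_saturation (B : AddSubgroup A) : B ≤ B.saturation :=
  fun x hx => mem_saturation.mpr ⟨1, one_ne_zero, by rwa [one_smul]⟩

theorem le_saturation_of_finiteIndex {B H H' : AddSubgroup A} (hH' : H' ≤ B)
    [(H'.addSubgroupOf H).FiniteIndex] : H ≤ B.saturation := by
  intro x hx
  refine mem_saturation.mpr
    ⟨(H'.addSubgroupOf H).index, by exact_mod_cast FiniteIndex.index_ne_zero, ?_⟩
  have := nsmul_index_mem (H'.addSubgroupOf H) ⟨x, hx⟩
  rw [mem_addSubgroupOf] at this
  exact hH' (by exact_mod_cast this)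

theorem exists_isCompl_saturation [Module.Finite ℤ A] (B : AddSubgroup A) :
    ∃ C : AddSubgroup A, IsCompl B.saturation C := by
  set T := Submodule.torsion ℤ (A ⧸ B.toIntSubmodule)
  have hker : LinearMap.ker (T.mkQ ∘ₗ B.toIntSubmodule.mkQ) = T.comap B.toIntSubmodule.mkQ := by
    rw [LinearMap.ker_comp, Submodule.ker_mkQ]
  have : Module.Free ℤ ((A ⧸ B.toIntSubmodule) ⧸ T) := Module.free_of_finite_type_torsion_free'
  obtain ⟨q, hq⟩ := LinearMap.exists_isCompl_ker (T.mkQ ∘ₗ B.toIntSubmodule.mkQ)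
    (T.mkQ_surjective.comp B.toIntSubmodule.mkQ_surjective)
  refine ⟨q.toAddSubgroup, ?_⟩
  rw [hker] at hq
  exact (OrderIso.isCompl_iff AddSubgroup.toIntSubmodule.symm).mp hq

theorem finiteIndex_of_forall_exists_zsmul_mem [Module.Finite ℤ A] {H : AddSubgroup A}
    (h : ∀ x, ∃ m : ℤ, m ≠ 0 ∧ m • x ∈ H) : H.FiniteIndex := by
  have := Module.Finite.iff_addGroup_fg.mp ‹_›
  refine finiteIndex_iff_finite_quotient.mpr (AddCommGroup.finite_of_fg_isAddTorsion _ ?_)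
  rintro ⟨x⟩
  obtain ⟨m, hm, hmx⟩ := h x
  exact isOfFinAddOrder_iff_zsmul_eq_zero.mpr ⟨m, hm, (QuotientAddGroup.eq_zero_iff _).mpr hmx⟩

theorem finiteIndex_sup_of_isCompl_saturation [Module.Finite ℤ A] {B C : AddSubgroup A}
    (hC : IsCompl B.saturation C) : (B ⊔ C).FiniteIndex := by
  refine finiteIndex_of_forall_exists_zsmul_mem fun x => ?_
  obtain ⟨k, hk, c, hc, rfl⟩ := mem_sup.mp (hC.sup_eq_top ▸ mem_top x)
  obtain ⟨m, hm, hmk⟩ := mem_saturation.mp hk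
  refine ⟨m, hm, ?_⟩
  rw [smul_add]
  exact add_mem (mem_sup_left hmk) (mem_sup_right (zsmul_mem hc m))

end AddSubgroup

theorem freeAbelian_strong_commanding_general
    {A : Type*} [AddCommGroup A] [Module.Finite ℤ A]
    (n : ℕ) (S : Fin n → AddSubgroup A)
    (hind : ∀ a : Fin n → A, (∀ i, a i ∈ S i) → (∑ i, a i) = 0 → ∀ i, a i = 0)
    (S' : Fin n → AddSubgroup A) (hle : ∀ i, S' i ≤ S i)
    (hfin : ∀ i, ((S' i).addSubgroupOf (S i)).FiniteIndex) :
    ∃ C : AddSubgroup A, C ⊓ (⨆ i, S' i) = ⊥ ∧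
      ((⨆ i, S' i) ⊔ C).FiniteIndex ∧
      (∀ i, S i ⊓ ((⨆ i, S' i) ⊔ C) = S' i) ∧
      ∀ j k, j ≠ k →
        (((⨆ i, S' i) ⊔ C) ⊔ S j) ⊓ (((⨆ i, S' i) ⊔ C) ⊔ S k) = (⨆ i, S' i) ⊔ C := by
  set B := ⨆ i, S' i
  have hS : iSupIndep S := AddSubgroup.iSupIndep_of_sum_eq_zero hind
  obtain ⟨C, hC⟩ := B.exists_isCompl_saturation
  have hSK (i : Fin n) : S i ≤ B.saturation :=
    AddSubgroup.le_saturation_of_finiteIndex (H' := S' i) (le_iSup S' i)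
  have hA' : (B ⊔ C) ⊓ B.saturation = B := by
    rw [sup_inf_assoc_of_le C B.le_saturation, hC.symm.inf_eq_bot, sup_bot_eq]
  exact ⟨C, (hC.disjoint.symm.mono_right B.le_saturation).eq_bot,
    AddSubgroup.finiteIndex_sup_of_isCompl_saturation hC,
    hS.inf_eq_of_inf_eq_iSup hle hSK hA',
    fun j k => hS.sup_inf_sup_eq_of_inf_eq_iSup hle hSK hA'⟩

/-- Strong commanding for free abelian groups: given linearly independent subgroups
`S₁, …, Sₙ` of a finitely generated free abelian group `A` and finite-index subgroups
`S′ᵢ ≤ Sᵢ`, letting `B = S′₁ + ⋯ + S′ₙ`, there is a subgroup `C` with `C ∩ B = 0` such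
that `A′ := B + C` has finite index in `A`, `Sᵢ ∩ A′ = S′ᵢ` for all `i`, and
`(A′ + Sⱼ) ∩ (A′ + Sₖ) = A′` for all `j ≠ k`. -/
theorem freeAbelian_strong_commanding
    {A : Type*} [AddCommGroup A] [Module.Free ℤ A] [Module.Finite ℤ A]
    (n : ℕ) (S : Fin n → AddSubgroup A)
    (hind : ∀ a : Fin n → A, (∀ i, a i ∈ S i) → (∑ i, a i) = 0 → ∀ i, a i = 0)
    (S' : Fin n → AddSubgroup A) (hle : ∀ i, S' i ≤ S i)
    (hfin : ∀ i, ((S' i).addSubgroupOf (S i)).FiniteIndex) :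
    ∃ C : AddSubgroup A, C ⊓ (⨆ i, S' i) = ⊥ ∧
      ((⨆ i, S' i) ⊔ C).FiniteIndex ∧
      (∀ i, S i ⊓ ((⨆ i, S' i) ⊔ C) = S' i) ∧
      ∀ j k, j ≠ k →
        (((⨆ i, S' i) ⊔ C) ⊔ S j) ⊓ (((⨆ i, S' i) ⊔ C) ⊔ S k) = (⨆ i, S' i) ⊔ C :=
  freeAbelian_strong_commanding_general n S hind S' hle hfin
end
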